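/- Let τ be the ℚ-algebra automorphism of the polynomial ring ℚ[v₁, v₂, v₃, v₄] determined by τ(v₁) = v₂, τ(v₂) = v₁, τ(v₃) = v₄, τ(v₄) = v₃. Then the subalgebra of τ-invariant polynomials equals the ℚ-subalgebra generated by the five elements u₁ = v₁ + v₂, u₂ = v₃ + v₄, u₃ = v₁² + v₂², u₄ = v₃² + v₄², and u₅ = v₁v₄ + v₂v₃. -/

import Mathlib

/-! Let `𝒰` be the algebra generated by the `uᵢ`. Since `v₁ + v₂ = u₁` and
`v₁v₂ = (u₁² − u₃)/2` lie in `𝒰`, and likewise for `v₃, v₄`, every polynomial is a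
`𝒰`-linear combination of `1, v₁, v₃, v₁v₃`. As `τ` fixes `𝒰`, the Reynolds operator
`P ↦ P + τP` is `𝒰`-linear, and it sends these four elements to `2, u₁, u₂, u₁u₂ − u₅ ∈ 𝒰`.
Hence `P + τP ∈ 𝒰` for every `P`, and an invariant `P` is `(P + τP)/2`. -/

open MvPolynomial

/-- The permutation `(v₁ v₂)(v₃ v₄)` of the variables of `ℚ[v₁, v₂, v₃, v₄]`
(with `v₁ = X 0`, `v₂ = X 1`, `v₃ = X 2`, `v₄ = X 3`). -/
def perm : Equiv.Perm (Fin 4) := (Equiv.swap 0 1).trans (Equiv.swap 2 3)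

open Submodule
open scoped Pointwise

section Reynolds

variable {R : Type*} [CommRing R] [Algebra ℚ R] (A : Subalgebra ℚ R)

theorem mem_of_fixed_of_span_eq_top (σ : R →ₐ[ℚ] R) (hσ : ∀ a ∈ A, σ a = a) {S : Set R}
    (hS : span A S = ⊤) (hSA : ∀ s ∈ S, s + σ s ∈ A) {P : R} (hP : σ P = P) : P ∈ A := by
  have hsum : P + σ P ∈ A := by
    have hPS : P ∈ span A S := hS ▸ mem_top
    clear hP
    induction hPS using span_induction with
    | mem s hs => exact hSA s hs
    | zero => simp
    | add x y _ _ hx hy => simpa [add_add_add_comm] using A.add_mem hx hy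
    | smul a x _ hx =>
      rw [Subalgebra.smul_def, smul_eq_mul, map_mul, hσ a a.2, ← mul_add]
      exact A.mul_mem a.2 hx
  have : P = (2⁻¹ : ℚ) • (P + σ P) := by
    rw [hP, ← two_smul ℚ P, inv_smul_smul₀ two_ne_zero]
  exact this ▸ A.smul_mem hsum _

theorem mul_mem_of_add_mem_of_sq_add_sq_mem {x y : R} (h₁ : x + y ∈ A)
    (h₂ : x ^ 2 + y ^ 2 ∈ A) : x * y ∈ A := by
  have : x * y = (2⁻¹ : ℚ) • ((x + y) ^ 2 - (x ^ 2 + y ^ 2)) := by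
    rw [show (x + y) ^ 2 - (x ^ 2 + y ^ 2) = (2 : ℚ) • (x * y) by rw [two_smul]; ring,
      inv_smul_smul₀ two_ne_zero]
  exact this ▸ A.smul_mem (A.sub_mem (A.pow_mem h₁ 2) h₂) _

end Reynolds

section Quadratic

variable {S R : Type*} [CommRing S] [CommRing R] [Algebra S R]

theorem mul_self_mem_span_pair (A : Subalgebra S R) {x y : R} (h₁ : x + y ∈ A) (h₂ : x * y ∈ A) :
    x * x ∈ span A {1, x} :=
  mem_span_pair.2 ⟨-⟨x * y, h₂⟩, ⟨x + y, h₁⟩, by simp [Subalgebra.smul_def]; ring⟩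

theorem toSubmodule_adjoin_singleton_eq_span_pair {x : R} (hx : x * x ∈ span S {1, x}) :
    Subalgebra.toSubmodule (Algebra.adjoin S {x}) = span S {1, x} := by
  have hmul : span S {1, x} * span S {1, x} ≤ span S {1, x} := by
    rw [span_mul_span, span_le]
    rintro _ ⟨a, ha, b, hb, rfl⟩
    rcases ha with rfl | rfl <;> rcases hb with rfl | rfl
    all_goals first
      | exact hx
      | simpa using subset_span (by simp)
  refine le_antisymm ?_ (span_le.2 ?_)
  · let B := (span S {1, x}).toSubalgebra (subset_span (by simp))
      fun _ _ ha hb => hmul (mul_mem_mul ha hb)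
    exact (Algebra.adjoin_le (S := B)
      (Set.singleton_subset_iff.2 (subset_span (Set.mem_insert_of_mem _ rfl))) :)
  · rintro _ (rfl | rfl)
    · exact (Algebra.adjoin S {x}).one_mem
    · exact Algebra.subset_adjoin rfl

end Quadratic

local notation "𝒰" => Algebra.adjoin ℚ ({X 0 + X 1, X 2 + X 3, X 0 ^ 2 + X 1 ^ 2,
  X 2 ^ 2 + X 3 ^ 2, X 0 * X 3 + X 1 * X 2} : Set (MvPolynomial (Fin 4) ℚ))

theorem rename_perm_eq_self_of_mem {P : MvPolynomial (Fin 4) ℚ} (hP : P ∈ 𝒰) :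
    rename perm P = P := by
  suffices 𝒰 ≤ AlgHom.equalizer (rename perm) (AlgHom.id ℚ _) from this hP
  rw [Algebra.adjoin_le_iff]
  rintro _ (rfl | rfl | rfl | rfl | rfl) <;>
    simp [perm, Equiv.swap_apply_of_ne_of_ne] <;> ring

theorem add_rename_perm_mem {s : MvPolynomial (Fin 4) ℚ}
    (hs : s ∈ ({1, X 0} * {1, X 2} : Set (MvPolynomial (Fin 4) ℚ))) : s + rename perm s ∈ 𝒰 := by
  have h₀₁ : X 0 + X 1 ∈ 𝒰 := Algebra.subset_adjoin (by simp)
  have h₂₃ : X 2 + X 3 ∈ 𝒰 := Algebra.subset_adjoin (by simp)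
  have h₅ : X 0 * X 3 + X 1 * X 2 ∈ 𝒰 := Algebra.subset_adjoin (by simp)
  obtain ⟨a, ha, b, hb, rfl⟩ := hs
  rcases ha with rfl | rfl <;> rcases hb with rfl | rfl <;>
    simp only [perm, one_mul, mul_one, map_one, map_mul, rename_X, Equiv.trans_apply,
      Equiv.swap_apply_left, Equiv.swap_apply_of_ne_of_ne, ne_eq,
      Fin.reduceEq, not_false_eq_true]
  · exact add_mem (one_mem _) (one_mem _)
  · exact h₂₃
  · exact h₀₁
  · convert sub_mem (mul_mem h₀₁ h₂₃) h₅ using 1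
    ring

theorem adjoin_X_zero_X_two_eq_top :
    Algebra.adjoin 𝒰 {(X 0 : MvPolynomial (Fin 4) ℚ), X 2} = ⊤ := by
  set T := Algebra.adjoin 𝒰 {(X 0 : MvPolynomial (Fin 4) ℚ), X 2}
  have h₀ : X 0 ∈ T := Algebra.subset_adjoin (by simp)
  have h₂ : X 2 ∈ T := Algebra.subset_adjoin (by simp)
  have h₀₁ : X 0 + X 1 ∈ T := T.algebraMap_mem (⟨_, Algebra.subset_adjoin (by simp)⟩ : 𝒰)
  have h₂₃ : X 2 + X 3 ∈ T := T.algebraMap_mem (⟨_, Algebra.subset_adjoin (by simp)⟩ : 𝒰)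
  apply Subalgebra.restrictScalars_injective ℚ
  rw [Subalgebra.restrictScalars_top, eq_top_iff, ← adjoin_range_X, Algebra.adjoin_le_iff]
  rintro _ ⟨i, rfl⟩
  fin_cases i
  · exact h₀
  · simpa using sub_mem h₀₁ h₀
  · exact h₂
  · simpa using sub_mem h₂₃ h₂

theorem span_one_X_zero_mul_one_X_two_eq_top :
    span 𝒰 ({1, X 0} * {1, X 2} : Set (MvPolynomial (Fin 4) ℚ)) = ⊤ := by
  have h₀₁ : X 0 + X 1 ∈ 𝒰 := Algebra.subset_adjoin (by simp)
  have h₂₃ : X 2 + X 3 ∈ 𝒰 := Algebra.subset_adjoin (by simp)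
  have h₀ := mul_self_mem_span_pair 𝒰 h₀₁
    (mul_mem_of_add_mem_of_sq_add_sq_mem 𝒰 h₀₁ (Algebra.subset_adjoin (by simp)))
  have h₂ := mul_self_mem_span_pair 𝒰 h₂₃
    (mul_mem_of_add_mem_of_sq_add_sq_mem 𝒰 h₂₃ (Algebra.subset_adjoin (by simp)))
  rw [← span_mul_span 𝒰, ← toSubmodule_adjoin_singleton_eq_span_pair h₀,
    ← toSubmodule_adjoin_singleton_eq_span_pair h₂, ← Algebra.adjoin_union_coe_submodule,
    Set.singleton_union, adjoin_X_zero_X_two_eq_top, Algebra.top_toSubmodule]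

/-- Let `τ` be the ℚ-algebra automorphism of `ℚ[v₁, v₂, v₃, v₄]` with `τ(v₁) = v₂`,
`τ(v₂) = v₁`, `τ(v₃) = v₄`, `τ(v₄) = v₃`.  The subalgebra of `τ`-invariant polynomials
is generated over ℚ by `u₁ = v₁ + v₂`, `u₂ = v₃ + v₄`, `u₃ = v₁² + v₂²`,
`u₄ = v₃² + v₄²` and `u₅ = v₁v₄ + v₂v₃`. -/
theorem stmt12 :
    ∀ P : MvPolynomial (Fin 4) ℚ,
      (renameEquiv ℚ perm) P = P ↔
        P ∈ Algebra.adjoin ℚ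
          ({X 0 + X 1, X 2 + X 3, X 0 ^ 2 + X 1 ^ 2, X 2 ^ 2 + X 3 ^ 2,
            X 0 * X 3 + X 1 * X 2} : Set (MvPolynomial (Fin 4) ℚ)) := by
  intro P
  refine ⟨fun hP => ?_, rename_perm_eq_self_of_mem⟩
  exact mem_of_fixed_of_span_eq_top 𝒰 (rename perm) (fun _ => rename_perm_eq_self_of_mem)
    span_one_X_zero_mul_one_X_two_eq_top (fun _ => add_rename_perm_mem) hP
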